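/- With M, h, c₀,…,c₄ and the automorphisms σ_I as in the context, let Γ ⊆ Aut(M) be a subgroup every element of which equals σ_I for some subset I ⊆ {0,1,2,3,4} of even cardinality with I ∩ {0,1} ∈ {∅, {0,1}}, and suppose Γ contains some σ_I with {0,1} ⊆ I. Then the image of c₀ + c₁ in M/2M is fixed by Γ, and c₀ + c₁ ∉ 2M + M^Γ if and only if Γ contains some σ_I with I ∩ {2,3,4} ≠ ∅. -/

import Mathlib

open scoped Matrix

/-- Basis index for `M = ℤ⁶`: `none ↦ e`, `some i ↦ cᵢ`. -/
abbrev Idx := Option (Fin 5)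

/-- `M = ℤ⁶`, the free abelian group on `e, c₀, …, c₄`, as coordinate vectors. -/
abbrev Mlat := Idx → ℤ

/-- The coordinate vector of `h = 2e − (c₀ + c₁ + c₂ + c₃ + c₄)`. -/
def hvec : Mlat := fun r => match r with | none => 2 | some _ => -1

/-- The coordinate vector of the basis element `cᵢ`. -/
def cvec (i : Fin 5) : Mlat := Pi.single (some i) 1

/-- The matrix of the automorphism `σ_I` of `M = ℤ⁶` (in the basis `e, c₀, …, c₄`):
`σ_I` fixes `h = 2e − Σᵢcᵢ`, sends `cᵢ ↦ h − cᵢ` for `i ∈ I`, fixes `cᵢ` for `i ∉ I`,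
and sends `e ↦ e + (|I|/2)·h − Σ_{i∈I} cᵢ`. Columns are the images of the basis
vectors. -/
def sigmaMat (I : Finset (Fin 5)) : Matrix Idx Idx ℤ :=
  Matrix.of fun r c =>
    match c with
    | none =>
      match r with
      | none => 1 + I.card
      | some j => -((I.card : ℤ) / 2) - (if j ∈ I then 1 else 0)
    | some i =>
      if i ∈ I then
        match r with
        | none => 2
        | some j => if j = i then -2 else -1
      else
        match r with
        | none => 0
        | some j => if j = i then 1 else 0


/-- The class of `c₀ + c₁` in `M/2M`. -/
def c01bar : Idx → ZMod 2 := fun r => (((cvec 0 + cvec 1) r : ℤ) : ZMod 2)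

/-!
Mod 2, `σ_I` acts on `c₀ + c₁` by adding `|I ∩ {0,1}|·h`, which vanishes under the hypothesis on
`I ∩ {0,1}`. If `Γ` contains no `σ_I` meeting `{2,3,4}`, then `Γ ⊆ {σ_∅, σ_{0,1}}`, and
`c₀ + c₁ = 2(c₀ + ⋯ + c₄ − e) + (h − c₂ − c₃ − c₄)` with the second summand fixed by both.
Conversely, if `w` is fixed by `σ_I` and `j ∈ I`, then `2 w_{cⱼ} = −w_e`. So a `w ∈ M^Γ` has
equal `c₀`- and `cⱼ`-coordinates as soon as `Γ` contains `σ_I ∋ 0` and `σ_J ∋ j`; but in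
`c₀ + c₁ = 2m + w` the `c₀`-coordinate of `w` is odd and, for `j ∈ {2,3,4}`, the `cⱼ`-coordinate
is even.
-/

theorem sigmaMat_mulVec_none (I : Finset (Fin 5)) (w : Mlat) :
    (sigmaMat I *ᵥ w) none = (1 + I.card) * w none + 2 * ∑ i ∈ I, w (some i) := by
  simp [Matrix.mulVec, dotProduct, sigmaMat, Fintype.sum_option, Finset.mul_sum, ite_mul]

theorem sigmaMat_mulVec_some_of_mem (I : Finset (Fin 5)) (w : Mlat) {j : Fin 5} (hj : j ∈ I) :
    (sigmaMat I *ᵥ w) (some j) =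
      -((I.card : ℤ) / 2 + 1) * w none - ∑ i ∈ I, w (some i) - w (some j) := by
  simp only [Matrix.mulVec, dotProduct, sigmaMat, Int.reduceNeg, Matrix.of_apply, hj,
    ↓reduceIte, Fintype.sum_option, ite_mul, neg_mul, one_mul, zero_mul, neg_add_rev]
  have hsum : ∀ x : Fin 5,
      (if x ∈ I then if j = x then -(2 * w (some x)) else -w (some x)
        else if j = x then w (some x) else 0) =
      (if x ∈ I then -w (some x) else 0) - if j = x then w (some x) else 0 := by
    intro x
    split_ifs with hx hjx hjx
    · ring
    · ring
    · exact absurd (hjx ▸ hj) hx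
    · ring
  simp only [hsum, Finset.sum_sub_distrib, Finset.sum_ite_mem, Finset.univ_inter,
    Finset.sum_neg_distrib, Finset.sum_ite_eq, Finset.mem_univ, if_true]
  ring

theorem two_mul_apply_some_of_sigmaMat_mulVec_eq {I : Finset (Fin 5)} (hI : Even I.card)
    {w : Mlat} (hw : sigmaMat I *ᵥ w = w) {j : Fin 5} (hj : j ∈ I) :
    2 * w (some j) = -w none := by
  obtain ⟨k, hk⟩ := hI
  have hcard : (I.card : ℤ) = k + k := by exact_mod_cast hk
  have hnone := sigmaMat_mulVec_none I w
  have hsome := sigmaMat_mulVec_some_of_mem I w hj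
  rw [hw, hcard] at hnone
  rw [hw, hcard, show ((k : ℤ) + k) / 2 = k by omega] at hsome
  linarith

theorem sigmaMat_map_mulVec_c01bar :
    ∀ I : Finset (Fin 5), (I ∩ {0, 1} = ∅ ∨ I ∩ {0, 1} = {0, 1}) →
      ((sigmaMat I).map (Int.cast : ℤ → ZMod 2)) *ᵥ c01bar = c01bar := by
  decide

theorem eq_empty_or_eq_pair_of_inter_eq_empty :
    ∀ I : Finset (Fin 5), (I ∩ {0, 1} = ∅ ∨ I ∩ {0, 1} = {0, 1}) → I ∩ {2, 3, 4} = ∅ →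
      I = ∅ ∨ I = {0, 1} := by
  decide

theorem exists_c01_eq_two_smul_add_fixed :
    ∃ m w : Mlat, sigmaMat ∅ *ᵥ w = w ∧ sigmaMat {0, 1} *ᵥ w = w ∧
      cvec 0 + cvec 1 = 2 • m + w :=
  ⟨∑ i, cvec i - Pi.single none 1, hvec - cvec 2 - cvec 3 - cvec 4, by decide, by decide,
    by decide⟩

theorem c01_ne_two_smul_add_of_mulVec_eq {I J : Finset (Fin 5)} (hI : Even I.card)
    (hJ : Even J.card) (h0 : 0 ∈ I) {j : Fin 5} (hjJ : j ∈ J) (hj0 : j ≠ 0) (hj1 : j ≠ 1)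
    {m w : Mlat} (hwI : sigmaMat I *ᵥ w = w) (hwJ : sigmaMat J *ᵥ w = w) :
    cvec 0 + cvec 1 ≠ 2 • m + w := by
  intro heq
  have hc0 := two_mul_apply_some_of_sigmaMat_mulVec_eq hI hwI h0
  have hcj := two_mul_apply_some_of_sigmaMat_mulVec_eq hJ hwJ hjJ
  have e0 : 1 = 2 * m (some 0) + w (some 0) := by simpa [cvec] using congrFun heq (some 0)
  have ej : 0 = 2 * m (some j) + w (some j) := by
    simpa [cvec, hj0, hj1] using congrFun heq (some j)
  omega

/-- Let `Γ ⊆ Aut(M)` be a subgroup every element of which is some `σ_I` with `I` of even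
cardinality and `I ∩ {0,1} ∈ {∅, {0,1}}`, and suppose `Γ` contains some `σ_I` with
`{0,1} ⊆ I`. Then the image of `c₀ + c₁` in `M/2M` is fixed by `Γ`, and
`c₀ + c₁ ∉ 2M + M^Γ` if and only if `Γ` contains some `σ_I` with `I ∩ {2,3,4} ≠ ∅`. -/
theorem c01_fixed_and_nontrivial_iff (Γ : Subgroup (Matrix Idx Idx ℤ)ˣ)
    (hΓ : ∀ u ∈ Γ, ∃ I : Finset (Fin 5), Even I.card ∧
      (I ∩ {0, 1} = ∅ ∨ I ∩ {0, 1} = {0, 1}) ∧ (u : Matrix Idx Idx ℤ) = sigmaMat I)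
    (hex : ∃ u ∈ Γ, ∃ I : Finset (Fin 5), Even I.card ∧ {0, 1} ⊆ I ∧
      (u : Matrix Idx Idx ℤ) = sigmaMat I) :
    (∀ u ∈ Γ, ((u : Matrix Idx Idx ℤ).map (Int.cast : ℤ → ZMod 2)) *ᵥ c01bar = c01bar) ∧
    ((¬ ∃ m w : Mlat, (∀ u ∈ Γ, (u : Matrix Idx Idx ℤ) *ᵥ w = w) ∧
        cvec 0 + cvec 1 = 2 • m + w) ↔
      ∃ u ∈ Γ, ∃ I : Finset (Fin 5), Even I.card ∧ (u : Matrix Idx Idx ℤ) = sigmaMat I ∧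
        (I ∩ {2, 3, 4}).Nonempty) := by
  refine ⟨fun u hu => ?_, ⟨fun hne => ?_, ?_⟩⟩
  · obtain ⟨I, -, hI01, huI⟩ := hΓ u hu
    rw [huI]
    exact sigmaMat_map_mulVec_c01bar I hI01
  · by_contra! hno
    obtain ⟨m, w, hw₀, hw₁, heq⟩ := exists_c01_eq_two_smul_add_fixed
    refine hne ⟨m, w, fun u hu => ?_, heq⟩
    obtain ⟨I, hIe, hI01, huI⟩ := hΓ u hu
    rcases eq_empty_or_eq_pair_of_inter_eq_empty I hI01 (hno u hu I hIe huI) with rfl | rfl <;>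
      rw [huI]
    exacts [hw₀, hw₁]
  · rintro ⟨u, hu, J, hJe, hJu, j, hj⟩ ⟨m, w, hfix, heq⟩
    obtain ⟨v, hv, I, hIe, hI01, hIv⟩ := hex
    obtain ⟨hjJ, hj234⟩ := Finset.mem_inter.mp hj
    obtain ⟨hj0, hj1⟩ : j ≠ 0 ∧ j ≠ 1 := by
      simp only [Finset.mem_insert, Finset.mem_singleton] at hj234
      omega
    exact c01_ne_two_smul_add_of_mulVec_eq hIe hJe (hI01 (by simp)) hjJ hj0 hj1
      (hIv ▸ hfix v hv) (hJu ▸ hfix u hu) heq
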